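/- If F is a regular face for X (at r = {0}), then the function P_X^{F} belongs to F(X), i.e. for every rational subspace r, ∇_{X\r} P_X^{F} is supported on Γ ∩ r; indeed ∇_{X\r} P_X^{F} = P_{X∩r}^{F}. -/

import Mathlib

open Function

attribute [local instance] Classical.propDecidable

noncomputable section

/-- The lattice `Γ = ι → ℤ`. -/
abbrev ZLat (ι : Type*) := ι → ℤ
/-- The ambient real vector space `V = Γ ⊗ ℝ = ι → ℝ`. -/
abbrev Amb (ι : Type*) := ι → ℝ

variable {ι : Type*} [Fintype ι]

/-- Embedding of the lattice into the ambient space. -/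
def castV (γ : ZLat ι) : Amb ι := fun i => (γ i : ℝ)

/-- Standard pairing on `V`. -/
def dotR (u v : Amb ι) : ℝ := ∑ i, u i * v i

/-- The difference operator `∇ₐ`. -/
def nab (a : ZLat ι) (f : ZLat ι → ℤ) : ZLat ι → ℤ := fun b => f b - f (b - a)

/-- `∇_Y = ∏_{a ∈ Y} ∇ₐ` for a list `Y`. -/
def nabL (Y : List (ZLat ι)) (f : ZLat ι → ℤ) : ZLat ι → ℤ := Y.foldr nab f

/-- Delta function at `0`. -/
def delta0 : ZLat ι → ℤ := fun γ => if γ = 0 then 1 else 0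

/-- The partition function of a list `Y`: the number of ways of writing `γ` as a
nonnegative integral combination of the entries of `Y`. -/
def partFn (Y : List (ZLat ι)) : ZLat ι → ℤ :=
  fun γ => Nat.card {k : Fin Y.length → ℕ // ∑ i, (k i : ℤ) • Y.get i = γ}

/-- The cone `C(Y)` of nonnegative real combinations of the entries of `Y`. -/
def coneC (Y : List (ZLat ι)) : Set (Amb ι) :=
  {v | ∃ t : Fin Y.length → ℝ, (∀ i, 0 ≤ t i) ∧ v = ∑ i, t i • castV (Y.get i)}

/-- `C(Y)` is pointed: it contains no line. -/
def PointedList (Y : List (ZLat ι)) : Prop :=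
  ∀ v ∈ coneC Y, -v ∈ coneC Y → v = 0

/-- The zonotope `B(Y) = {∑ tᵢ aᵢ : 0 ≤ tᵢ ≤ 1}`. -/
def zono (Y : List (ZLat ι)) : Set (Amb ι) :=
  {v | ∃ t : Fin Y.length → ℝ, (∀ i, 0 ≤ t i ∧ t i ≤ 1) ∧ v = ∑ i, t i • castV (Y.get i)}

/-- The real span of a list of lattice vectors. -/
def spanOf (Y : List (ZLat ι)) : Submodule ℝ (Amb ι) :=
  Submodule.span ℝ (castV '' {a | a ∈ Y})

/-- A subspace is rational (relative to `X`) if it is spanned by a sublist of `X`. -/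
def IsRational (X : List (ZLat ι)) (r : Submodule ℝ (Amb ι)) : Prop :=
  ∃ Y : List (ZLat ι), (∀ a ∈ Y, a ∈ X) ∧ r = spanOf Y

/-- The sublist `X ∩ r`. -/
def inSub (X : List (ZLat ι)) (r : Submodule ℝ (Amb ι)) : List (ZLat ι) :=
  X.filter (fun a => decide (castV a ∈ r))

/-- The sublist `X \ r`. -/
def outSub (X : List (ZLat ι)) (r : Submodule ℝ (Amb ι)) : List (ZLat ι) :=
  X.filter (fun a => decide (castV a ∉ r))

/-- The operator `∇_{X \ r}`. -/
def nabOut (X : List (ZLat ι)) (r : Submodule ℝ (Amb ι)) (f : ZLat ι → ℤ) : ZLat ι → ℤ :=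
  nabL (outSub X r) f

/-- The space `𝓕(X)`: `∇_{X\r} f` is supported on `Γ ∩ r` for every rational `r`. -/
def memF (X : List (ZLat ι)) (f : ZLat ι → ℤ) : Prop :=
  ∀ r, IsRational X r → support (nabOut X r f) ⊆ {γ | castV γ ∈ r}

/-- The Dahmen–Micchelli space of a list `Y` (inside its span): `f` is killed by
`∇_{Y \ H}` for every rational hyperplane `H` of the span of `Y`. -/
def memDM (Y : List (ZLat ι)) (f : ZLat ι → ℤ) : Prop :=
  ∀ H, IsRational Y H → Module.finrank ℝ H + 1 = Module.finrank ℝ (spanOf Y) →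
    nabOut Y H f = 0

/-- `𝓕(X ∩ r)`, viewed as functions on `Γ` supported on `Γ ∩ r`. -/
def memFrel (X : List (ZLat ι)) (r : Submodule ℝ (Amb ι)) (g : ZLat ι → ℤ) : Prop :=
  support g ⊆ {γ | castV γ ∈ r} ∧ memF (inSub X r) g

/-- `DM(X ∩ r)`, viewed as functions on `Γ` supported on `Γ ∩ r`. -/
def memDMrel (X : List (ZLat ι)) (r : Submodule ℝ (Amb ι)) (g : ZLat ι → ℤ) : Prop :=
  support g ⊆ {γ | castV γ ∈ r} ∧ memDM (inSub X r) g

/-- `u` is a regular vector for `X \ r`:  `u ∈ r^⊥` and `⟨u, a⟩ ≠ 0` for all `a ∈ X \ r`.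
It determines the regular face `F` containing it. -/
def Reg (X : List (ZLat ι)) (r : Submodule ℝ (Amb ι)) (u : Amb ι) : Prop :=
  (∀ v ∈ r, dotR u v = 0) ∧ ∀ a ∈ X, castV a ∉ r → dotR u (castV a) ≠ 0

/-- The sublist `B ⊆ X \ r` of elements negative on `u`. -/
def negPart (X : List (ZLat ι)) (r : Submodule ℝ (Amb ι)) (u : Amb ι) : List (ZLat ι) :=
  (outSub X r).filter (fun a => decide (dotR u (castV a) < 0))

/-- The list `[A, -B]`: entries of `X \ r`, with sign flipped on the part negative on `u`. -/
def signedOut (X : List (ZLat ι)) (r : Submodule ℝ (Amb ι)) (u : Amb ι) : List (ZLat ι) :=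
  (outSub X r).map (fun a => if 0 < dotR u (castV a) then a else -a)

/-- The special function `𝓟_{X\r}^F` for the face `F ∋ u`:
`(-1)^{|B|} τ_{-∑_{b∈B} b} (∏_{a∈A} ∑_k δ_{ka}) * (∏_{b∈B} ∑_k δ_{-kb})`. -/
def PF (X : List (ZLat ι)) (r : Submodule ℝ (Amb ι)) (u : Amb ι) : ZLat ι → ℤ :=
  fun γ => (-1) ^ (negPart X r u).length *
    partFn (signedOut X r u) (γ + (negPart X r u).sum)

/-- The support region `-∑_{b∈B} b + C(A, -B)` of `𝓟_{X\r}^F`, as a subset of `Γ`. -/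
def PFsupp (X : List (ZLat ι)) (r : Submodule ℝ (Amb ι)) (u : Amb ι) : Set (ZLat ι) :=
  {γ | castV (γ + (negPart X r u).sum) ∈ coneC (signedOut X r u)}

/-- Convolution of two functions on the lattice. -/
def conv (f g : ZLat ι → ℤ) : ZLat ι → ℤ := fun γ => ∑ᶠ μ, f (γ - μ) * g μ

/-- The union of all rational hyperplanes (inside the span of `Y`). -/
def hyperUnion (Y : List (ZLat ι)) : Set (Amb ι) :=
  {v | ∃ H, IsRational Y H ∧ Module.finrank ℝ H + 1 = Module.finrank ℝ (spanOf Y) ∧ v ∈ H}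

/-- A tope for `Y`: a connected component of the complement (in the span of `Y`) of the
union of the hyperplanes spanned by sublists of `Y`. -/
def IsTope (Y : List (ZLat ι)) (τ : Set (Amb ι)) : Prop :=
  ∃ v ∈ (spanOf Y : Set (Amb ι)) \ hyperUnion Y,
    τ = connectedComponentIn ((spanOf Y : Set (Amb ι)) \ hyperUnion Y) v

/-- The set of singular vectors: the union of the cones `C(Y)` over sublists `Y` of `X`
not spanning `V`. -/
def singSet (X : List (ZLat ι)) : Set (Amb ι) :=
  {v | ∃ Y : List (ZLat ι), (∀ a ∈ Y, a ∈ X) ∧ spanOf Y ≠ ⊤ ∧ v ∈ coneC Y}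

/-- A big cell: a connected component of the complement of the set of singular vectors. -/
def IsBigCell (X : List (ZLat ι)) (c : Set (Amb ι)) : Prop :=
  ∃ v ∈ (singSet X)ᶜ, c = connectedComponentIn (singSet X)ᶜ v

/-- Minkowski difference of sets, `A - B`. -/
def sdiffSet (A B : Set (Amb ι)) : Set (Amb ι) := {x | ∃ a ∈ A, ∃ b ∈ B, x = a - b}

/-!
For a regular `u`, `𝓟_X^F` is the partition function of the list obtained by flipping every
vector of `X` into the open half-space `⟨u, ·⟩ > 0`, translated and signed. In that half-space
partition functions are finite and satisfy `p_{a::Y}(γ) = p_{a::Y}(γ - a) + p_Y(γ)`, according to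
whether `a` is used or not; for either sign of `⟨u, a⟩` this becomes `∇_a 𝓟_{a::Y} = 𝓟_Y`. As
`𝓟_Y` depends only on `Y` up to permutation and the `∇_a` commute, peeling off the vectors of
`X \ r` one at a time gives `∇_{X\r} 𝓟_X = 𝓟_{X∩r}`, which lives on the group generated by
`X ∩ r`, hence on `r`.
-/

section
variable {ι : Type*}

def castVHom : ZLat ι →+ Amb ι := AddMonoidHom.compLeft (Int.castAddHom ℝ) ι

@[simp] lemma castVHom_apply (γ : ZLat ι) : castVHom γ = castV γ := rfl

def Equiv.sigmaSigmaComm {α β : Type*} (γ : α → β → Type*) :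
    (Σ a, Σ b, γ a b) ≃ Σ b, Σ a, γ a b where
  toFun s := ⟨s.2.1, s.1, s.2.2⟩
  invFun s := ⟨s.2.1, s.1, s.2.2⟩

abbrev PartSol (Y : List (ZLat ι)) (γ : ZLat ι) : Type :=
  {k : Fin Y.length → ℕ // ∑ i, (k i : ℤ) • Y.get i = γ}

lemma partFn_eq_card (Y : List (ZLat ι)) (γ : ZLat ι) :
    partFn Y γ = Nat.card (PartSol Y γ) := rfl

def PartSol.congr {Y : List (ZLat ι)} {γ γ' : ZLat ι} (h : γ = γ') :
    PartSol Y γ ≃ PartSol Y γ' :=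
  Equiv.subtypeEquivRight fun _ => by rw [h]

def PartSol.consEquiv (a : ZLat ι) (Y : List (ZLat ι)) (γ : ZLat ι) :
    PartSol (a :: Y) γ ≃ Σ m : ℕ, PartSol Y (γ - (m : ℤ) • a) :=
  (Equiv.subtypeEquiv (Fin.consEquiv fun _ => ℕ).symm fun k => by
      simp [Fin.sum_univ_succ, eq_sub_iff_add_eq', Fin.tail]).trans
    (Equiv.subtypeProdEquivSigmaSubtype
      fun (m : ℕ) (k : Fin Y.length → ℕ) => ∑ i, (k i : ℤ) • Y.get i = γ - (m : ℤ) • a)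

lemma PartSol.nonempty_equiv_of_perm {Y Y' : List (ZLat ι)} (h : Y.Perm Y') (γ : ZLat ι) :
    Nonempty (PartSol Y γ ≃ PartSol Y' γ) := by
  induction h generalizing γ with
  | nil => exact ⟨Equiv.refl _⟩
  | cons a _ ih =>
    exact ⟨(consEquiv _ _ _).trans
      ((Equiv.sigmaCongrRight fun m => (ih _).some).trans (consEquiv _ _ _).symm)⟩
  | swap a b Y =>
    exact ⟨(consEquiv _ _ _).trans <|
      (Equiv.sigmaCongrRight fun m => consEquiv _ _ _).trans <|
      (Equiv.sigmaSigmaComm _).trans <|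
      (Equiv.sigmaCongrRight fun n => Equiv.sigmaCongrRight fun m =>
        congr (sub_right_comm _ _ _)).trans <|
      (Equiv.sigmaCongrRight fun n => (consEquiv _ _ _).symm).trans (consEquiv _ _ _).symm⟩
  | trans _ _ ih₁ ih₂ => exact ⟨(ih₁ γ).some.trans (ih₂ γ).some⟩

lemma partFn_perm {Y Y' : List (ZLat ι)} (h : Y.Perm Y') : partFn Y = partFn Y' :=
  funext fun γ => congrArg _ (Nat.card_congr (PartSol.nonempty_equiv_of_perm h γ).some)

lemma support_partFn_subset (Y : List (ZLat ι)) :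
    support (partFn Y) ⊆ AddSubmonoid.closure {a : ZLat ι | a ∈ Y} := by
  intro γ hγ
  obtain ⟨⟨k, rfl⟩⟩ : Nonempty (PartSol Y γ) :=
    (Nat.card_ne_zero.1 (Int.natCast_ne_zero.1 hγ)).1
  refine AddSubmonoid.sum_mem _ fun i _ => ?_
  rw [Nat.cast_smul_eq_nsmul]
  exact AddSubmonoid.nsmul_mem _ (AddSubmonoid.subset_closure (s := {a | a ∈ Y}) (Y.get_mem i)) _

lemma nab_comm (a b : ZLat ι) (f : ZLat ι → ℤ) : nab a (nab b f) = nab b (nab a f) := by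
  funext γ
  simp only [nab, sub_right_comm γ b a]
  ring

lemma nabL_nab (Y : List (ZLat ι)) (a : ZLat ι) (f : ZLat ι → ℤ) :
    nabL Y (nab a f) = nab a (nabL Y f) := by
  induction Y with
  | nil => rfl
  | cons b Y ih => exact (congrArg (nab b) ih).trans (nab_comm b a _)

lemma outSub_append_inSub_perm (X : List (ZLat ι)) (r : Submodule ℝ (Amb ι)) :
    (outSub X r ++ inSub X r).Perm X := by
  have h : inSub X r = X.filter (fun a => !decide (castV a ∉ r)) :=
    List.filter_congr fun a _ => by simp
  rw [h]
  exact List.filter_append_perm _ X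

lemma outSub_outSub_bot (X : List (ZLat ι)) (r : Submodule ℝ (Amb ι)) :
    outSub (outSub X ⊥) r = outSub X r := by
  simp only [outSub, List.filter_filter]
  refine List.filter_congr fun a _ => ?_
  by_cases h : castV a ∈ r
  · simp [h]
  · simpa [h] using fun h0 : castV a = 0 => h (h0 ▸ r.zero_mem)

lemma inSub_outSub_bot (X : List (ZLat ι)) (r : Submodule ℝ (Amb ι)) :
    inSub (outSub X ⊥) r = outSub (inSub X r) ⊥ := by
  simp only [inSub, outSub, List.filter_filter, Bool.and_comm]

end

section
variable {ι : Type*} [Fintype ι]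

def dotRCastHom (u : Amb ι) : ZLat ι →+ ℝ :=
  (dotProductBilin ℝ ℝ u).toAddMonoidHom.comp castVHom

lemma dotR_castV_neg (u : Amb ι) (a : ZLat ι) : dotR u (castV (-a)) = -dotR u (castV a) :=
  map_neg (dotRCastHom u) a

lemma PartSol.finite_of_pos {u : Amb ι} {Y : List (ZLat ι)}
    (hY : ∀ a ∈ Y, 0 < dotR u (castV a)) (γ : ZLat ι) : Finite (PartSol Y γ) := by
  let ℓ := dotRCastHom u
  let bound : Fin Y.length → ℕ := fun i => ⌊ℓ γ / ℓ (Y.get i)⌋₊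
  refine Set.Finite.to_subtype ((Set.finite_Iic bound).subset fun k hk i => ?_)
  have hpos : ∀ j, 0 < ℓ (Y.get j) := fun j => hY _ (Y.get_mem j)
  have hsum : ∑ j, (k j : ℝ) * ℓ (Y.get j) = ℓ γ := by
    rw [← (hk : ∑ j, (k j : ℤ) • Y.get j = γ), map_sum]
    refine Finset.sum_congr rfl fun j _ => ?_
    rw [map_zsmul, zsmul_eq_mul, Int.cast_natCast]
  have hle : (k i : ℝ) * ℓ (Y.get i) ≤ ℓ γ :=
    hsum ▸ Finset.single_le_sum (fun j _ => mul_nonneg (Nat.cast_nonneg _) (hpos j).le)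
      (Finset.mem_univ i)
  exact Nat.le_floor ((le_div_iff₀ (hpos i)).2 hle)

lemma partFn_cons {u : Amb ι} {a : ZLat ι} {Y : List (ZLat ι)}
    (hY : ∀ b ∈ a :: Y, 0 < dotR u (castV b)) (γ : ZLat ι) :
    partFn (a :: Y) γ = partFn (a :: Y) (γ - a) + partFn Y γ := by
  have := PartSol.finite_of_pos hY (γ - a)
  have := PartSol.finite_of_pos (fun b hb => hY b (List.mem_cons_of_mem a hb)) γ
  have e : PartSol (a :: Y) γ ≃ PartSol (a :: Y) (γ - a) ⊕ PartSol Y γ :=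
    (PartSol.consEquiv a Y γ).trans <| (Equiv.sigmaNatSucc _).trans <| (Equiv.sumComm _ _).trans <|
      Equiv.sumCongr
        ((Equiv.sigmaCongrRight fun m => PartSol.congr
            (by rw [Nat.cast_succ, add_smul, one_smul, sub_sub, add_comm])).trans
          (PartSol.consEquiv a Y (γ - a)).symm)
        (PartSol.congr (by simp))
  simp only [partFn_eq_card, Nat.card_congr e, Nat.card_sum, Nat.cast_add]

def negList (u : Amb ι) (Y : List (ZLat ι)) : List (ZLat ι) :=
  Y.filter (fun a => decide (dotR u (castV a) < 0))

def signedList (u : Amb ι) (Y : List (ZLat ι)) : List (ZLat ι) :=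
  Y.map (fun a => if 0 < dotR u (castV a) then a else -a)

def signedPartFn (u : Amb ι) (Y : List (ZLat ι)) : ZLat ι → ℤ :=
  fun γ => (-1) ^ (negList u Y).length * partFn (signedList u Y) (γ + (negList u Y).sum)

lemma PF_eq_signedPartFn (X : List (ZLat ι)) (r : Submodule ℝ (Amb ι)) (u : Amb ι) :
    PF X r u = signedPartFn u (outSub X r) := rfl

lemma pos_of_mem_signedList {u : Amb ι} {Y : List (ZLat ι)}
    (hY : ∀ a ∈ Y, dotR u (castV a) ≠ 0) :
    ∀ b ∈ signedList u Y, 0 < dotR u (castV b) := by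
  simp only [signedList, List.mem_map, forall_exists_index, and_imp]
  rintro _ a ha rfl
  split_ifs with h
  · exact h
  · rw [dotR_castV_neg]
    exact neg_pos.2 ((not_lt.1 h).lt_of_ne (hY a ha))

lemma signedPartFn_perm {u : Amb ι} {Y Y' : List (ZLat ι)} (h : Y.Perm Y') :
    signedPartFn u Y = signedPartFn u Y' := by
  have hneg : (negList u Y).Perm (negList u Y') := h.filter _
  funext γ
  simp only [signedPartFn, hneg.length_eq, hneg.sum_eq, partFn_perm (h.map _), signedList]

lemma nab_signedPartFn_cons {u : Amb ι} {a : ZLat ι} {Y : List (ZLat ι)}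
    (hY : ∀ b ∈ a :: Y, dotR u (castV b) ≠ 0) :
    nab a (signedPartFn u (a :: Y)) = signedPartFn u Y := by
  have hpos := pos_of_mem_signedList hY
  funext γ
  rcases (hY a List.mem_cons_self).lt_or_gt with ha | ha
  · have hneg : negList u (a :: Y) = a :: negList u Y := by simp [negList, ha]
    have hsgn : signedList u (a :: Y) = -a :: signedList u Y := by
      simp [signedList, not_lt.2 ha.le]
    rw [hsgn] at hpos
    have key := partFn_cons hpos (γ + (negList u Y).sum)
    rw [sub_neg_eq_add] at key
    simp only [nab, signedPartFn, hneg, hsgn, List.length_cons, List.sum_cons, pow_succ]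
    rw [show γ + (a + (negList u Y).sum) = γ + (negList u Y).sum + a by abel,
      show γ - a + (a + (negList u Y).sum) = γ + (negList u Y).sum by abel, key]
    ring
  · have hneg : negList u (a :: Y) = negList u Y := by simp [negList, not_lt.2 ha.le]
    have hsgn : signedList u (a :: Y) = a :: signedList u Y := by simp [signedList, ha]
    rw [hsgn] at hpos
    have key := partFn_cons hpos (γ + (negList u Y).sum)
    simp only [nab, signedPartFn, hneg, hsgn]
    rw [key, show γ + (negList u Y).sum - a = γ - a + (negList u Y).sum by abel]
    ring

lemma nabL_signedPartFn_append {u : Amb ι} {W Y : List (ZLat ι)}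
    (h : ∀ a ∈ W ++ Y, dotR u (castV a) ≠ 0) :
    nabL W (signedPartFn u (W ++ Y)) = signedPartFn u Y := by
  induction W with
  | nil => rfl
  | cons a W ih =>
    calc nab a (nabL W (signedPartFn u (a :: (W ++ Y))))
        = nabL W (nab a (signedPartFn u (a :: (W ++ Y)))) := (nabL_nab W a _).symm
      _ = signedPartFn u Y := by
        rw [nab_signedPartFn_cons (Y := W ++ Y) h]
        exact ih fun b hb => h b (List.mem_cons_of_mem a hb)

lemma nabL_signedPartFn_of_perm {u : Amb ι} {W Y Z : List (ZLat ι)} (hZ : (W ++ Y).Perm Z)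
    (h : ∀ a ∈ Z, dotR u (castV a) ≠ 0) : nabL W (signedPartFn u Z) = signedPartFn u Y := by
  rw [← signedPartFn_perm hZ]
  exact nabL_signedPartFn_append fun a ha => h a (hZ.subset ha)

lemma support_signedPartFn_subset (u : Amb ι) (Y : List (ZLat ι)) :
    support (signedPartFn u Y) ⊆ AddSubgroup.closure {a : ZLat ι | a ∈ Y} := by
  intro γ hγ
  set G := AddSubgroup.closure {a : ZLat ι | a ∈ Y}
  have hgen : ∀ a ∈ Y, a ∈ G := fun a ha => AddSubgroup.subset_closure (k := {a | a ∈ Y}) ha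
  have hshift : γ + (negList u Y).sum ∈ G := by
    refine (AddSubmonoid.closure_le (S := G.toAddSubmonoid)).2 ?_
      (support_partFn_subset _ (right_ne_zero_of_mul hγ))
    simp only [signedList, List.mem_map]
    rintro _ ⟨a, ha, rfl⟩
    split_ifs
    exacts [hgen a ha, G.neg_mem (hgen a ha)]
  have hneg : (negList u Y).sum ∈ G := list_sum_mem fun a ha => hgen a (List.mem_of_mem_filter ha)
  simpa using sub_mem hshift hneg

end

theorem PF_memF_general {ι : Type*} [Fintype ι] (X : List (ZLat ι))
    (u : Amb ι) (hu : Reg X ⊥ u) :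
    memF X (PF X ⊥ u) ∧
    ∀ r, IsRational X r → nabOut X r (PF X ⊥ u) = PF (inSub X r) ⊥ u := by
  have hreg : ∀ a ∈ outSub X ⊥, dotR u (castV a) ≠ 0 := fun a ha =>
    hu.2 a (List.mem_of_mem_filter ha) (by simpa using List.of_mem_filter ha)
  have key (r : Submodule ℝ (Amb ι)) : nabOut X r (PF X ⊥ u) = PF (inSub X r) ⊥ u := by
    rw [nabOut, PF_eq_signedPartFn, PF_eq_signedPartFn, ← outSub_outSub_bot,
      ← inSub_outSub_bot]
    exact nabL_signedPartFn_of_perm (outSub_append_inSub_perm _ r) hreg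
  refine ⟨fun r _ => ?_, fun r _ => key r⟩
  have hle : AddSubgroup.closure {a : ZLat ι | a ∈ outSub (inSub X r) ⊥} ≤
      r.toAddSubgroup.comap castVHom :=
    (AddSubgroup.closure_le _).2 fun a ha => by
      simpa [inSub] using List.of_mem_filter (List.mem_of_mem_filter ha)
  rw [key, PF_eq_signedPartFn]
  exact (support_signedPartFn_subset u _).trans hle

/-- If `F ∋ u` is a regular face for `X` (at `r = {0}`), then `𝓟_X^F ∈ 𝓕(X)`: for every
rational subspace `r`, `∇_{X\r} 𝓟_X^F` is supported on `Γ ∩ r`; indeed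
`∇_{X\r} 𝓟_X^F = 𝓟_{X∩r}^F`. -/
theorem PF_memF {ι : Type*} [Fintype ι] (X : List (ZLat ι))
    (hX0 : ∀ a ∈ X, a ≠ 0) (hspan : spanOf X = ⊤)
    (u : Amb ι) (hu : Reg X ⊥ u) :
    memF X (PF X ⊥ u) ∧
    ∀ r, IsRational X r → nabOut X r (PF X ⊥ u) = PF (inSub X r) ⊥ u :=
  PF_memF_general X u hu
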